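/- arXiv:1805.03547 — 4 statements merged into one kernel-verified Lean document; each statement's English description precedes it below -/
import Mathlib

section
/- Let A = (A_1, ..., A_d) and B = (B_1, ..., B_d) be commuting d-tuples of contractions on Hilbert spaces H and K respectively. Suppose there exists a unital multiplicative linear functional χ on the unital Banach algebra generated by B_1, ..., B_d with χ(B_j) = 1 for all j. If the tuple A ⊗ B = (A_1 ⊗ B_1, ..., A_d ⊗ B_d) on H ⊗ K satisfies von Neumann's inequality (i.e., ‖p(A⊗B)‖ ≤ sup_{z ∈ D^d} |p(z)| for all complex polynomials p in d variables), then A satisfies von Neumann's inequality. -/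
/-- `T^α = T_1^{α_1} ⋯ T_d^{α_d}` for a (commuting) tuple in a possibly noncommutative ring. -/
noncomputable def tuplePow {d : ℕ} {R : Type*} [Monoid R] (T : Fin d → R) (α : Fin d →₀ ℕ) : R :=
  (List.ofFn fun j => T j ^ α j).prod

/-- Evaluation `p(T) = Σ_α a_α T^α` of a polynomial on a tuple of operators. -/
noncomputable def polyEval {d : ℕ} {R : Type*} [Ring R] [Algebra ℂ R] (T : Fin d → R)
    (p : MvPolynomial (Fin d) ℂ) : R :=
  (AddMonoidAlgebra.coeff p).sum fun α a => a • tuplePow T α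

/-- `sup_{z ∈ 𝔻^d} |p(z)|`, the supremum of `|p|` over the open unit polydisc. -/
noncomputable def polySup {d : ℕ} (p : MvPolynomial (Fin d) ℂ) : ℝ :=
  ⨆ z : {z : Fin d → ℂ // ∀ i, ‖z i‖ < 1}, ‖MvPolynomial.eval z.1 p‖

/-!
The `B_j` have an approximate common fixed vector. Indeed `c = (1 + ∑ B_j) / (d + 1)` lies in the
closed algebra generated by the `B_j`, has norm `≤ 1` and satisfies `χ c = 1`. Because characters
of a Banach algebra have norm `≤ 1`, `‖(1 - r c)⁻¹‖ ≥ |χ (1 - r c)⁻¹| = (1 - r)⁻¹` for `r < 1`, so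
there are unit vectors `y_n` with `c y_n - y_n → 0`. For a contraction `T`,
`‖T y - y‖² ≤ 2 Re ⟪y - T y, y⟫`, and these nonnegative numbers sum to `(d + 1) Re ⟪y - c y, y⟫`;
hence `B_j y_n - y_n → 0` for every `j`.

Then `p(A ⊗ B) (x ⊗ y_n) - p(A) x ⊗ y_n → 0` while `‖p(A) x ⊗ y_n‖ = ‖p(A) x‖`, so von Neumann's
inequality for `A ⊗ B` passes to `A`.
-/

open Filter Topology

section TuplePow

variable {d : ℕ}

theorem tuplePow_mem {M : Type*} [Monoid M] (s : Submonoid M) {T : Fin d → M}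
    (hT : ∀ j, T j ∈ s) (α : Fin d →₀ ℕ) : tuplePow T α ∈ s :=
  s.list_prod_mem (by simpa [List.mem_ofFn] using fun j => pow_mem (hT j) (α j))

theorem map_tuplePow {F M N : Type*} [Monoid M] [Monoid N] [FunLike F M N]
    [MonoidHomClass F M N] (f : F) (T : Fin d → M) (α : Fin d →₀ ℕ) :
    f (tuplePow T α) = tuplePow (f ∘ T) α := by
  simp [tuplePow, map_list_prod, List.map_ofFn, Function.comp_def]

theorem polyEval_eq_sum {R : Type*} [Ring R] [Algebra ℂ R] (T : Fin d → R)
    (p : MvPolynomial (Fin d) ℂ) :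
    polyEval T p = ∑ α ∈ p.support, MvPolynomial.coeff α p • tuplePow T α :=
  rfl

end TuplePow

section ApproxFixed

variable {R M : Type*} [Semiring R] [AddCommGroup M] [TopologicalSpace M]
  [IsTopologicalAddGroup M] [Module R M]

def approxFixingSubmonoid {ι : Type*} (l : Filter ι) (y : ι → M) : Submonoid (M →L[R] M) where
  carrier := {T | Tendsto (fun i => T (y i) - y i) l (𝓝 0)}
  one_mem' := by simpa using tendsto_const_nhds
  mul_mem' {S T} hS hT := by
    have h := ((S.continuous.tendsto 0).comp hT).add hS
    simp only [map_zero, zero_add] at h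
    refine h.congr fun i => ?_
    simp

theorem tendsto_tuplePow_apply_sub_self {d : ℕ} {ι : Type*} {l : Filter ι} {y : ι → M}
    {T : Fin d → M →L[R] M} (hT : ∀ j, Tendsto (fun i => T j (y i) - y i) l (𝓝 0))
    (α : Fin d →₀ ℕ) : Tendsto (fun i => tuplePow T α (y i) - y i) l (𝓝 0) :=
  tuplePow_mem (approxFixingSubmonoid l y) hT α

end ApproxFixed

section Tensor

variable {𝕜 H K E : Type*} [RCLike 𝕜]
  [NormedAddCommGroup H] [InnerProductSpace 𝕜 H]
  [NormedAddCommGroup K] [InnerProductSpace 𝕜 K]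
  [NormedAddCommGroup E] [InnerProductSpace 𝕜 E]

theorem norm_apply_apply_of_inner {t : H →ₗ[𝕜] K →ₗ[𝕜] E}
    (ht : ∀ (x x' : H) (y y' : K),
      (inner 𝕜 (t x y) (t x' y') : 𝕜) = (inner 𝕜 x x' : 𝕜) * (inner 𝕜 y y' : 𝕜))
    (x : H) (y : K) : ‖t x y‖ = ‖x‖ * ‖y‖ := by
  have h := ht x x y y
  simp only [inner_self_eq_norm_sq_to_K] at h
  have hsq : ‖t x y‖ ^ 2 = (‖x‖ * ‖y‖) ^ 2 := by
    rw [mul_pow]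
    exact_mod_cast h
  exact (pow_left_inj₀ (norm_nonneg _) (by positivity) two_ne_zero).1 hsq

def tensorCompatible (t : H →ₗ[𝕜] K →ₗ[𝕜] E) :
    Submonoid ((H →L[𝕜] H) × (K →L[𝕜] K) × (E →L[𝕜] E)) where
  carrier := {T | ∀ x y, T.2.2 (t x y) = t (T.1 x) (T.2.1 y)}
  one_mem' := by simp
  mul_mem' {S T} hS hT x y := by
    simpa using (congrArg S.2.2 (hT x y)).trans (hS _ _)

theorem tuplePow_apply_tensor {d : ℕ} {t : H →ₗ[𝕜] K →ₗ[𝕜] E}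
    {A : Fin d → H →L[𝕜] H} {B : Fin d → K →L[𝕜] K} {AB : Fin d → E →L[𝕜] E}
    (hAB : ∀ j x y, AB j (t x y) = t (A j x) (B j y)) (α : Fin d →₀ ℕ) (x : H) (y : K) :
    tuplePow AB α (t x y) = t (tuplePow A α x) (tuplePow B α y) := by
  let T : Fin d → _ := fun j => (A j, B j, AB j)
  have hA : (tuplePow T α).1 = tuplePow A α := map_tuplePow (MonoidHom.fst _ _) T α
  have hB : (tuplePow T α).2.1 = tuplePow B α :=
    map_tuplePow ((MonoidHom.fst _ _).comp (MonoidHom.snd _ _)) T α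
  have hAB' : (tuplePow T α).2.2 = tuplePow AB α :=
    map_tuplePow ((MonoidHom.snd _ _).comp (MonoidHom.snd _ _)) T α
  simpa only [hA, hB, hAB'] using tuplePow_mem (tensorCompatible t) (T := T) hAB α x y

end Tensor

section ApproximateEigenvector

variable {𝕜 K : Type*} [RCLike 𝕜] [NormedAddCommGroup K] [NormedSpace 𝕜 K]

theorem exists_norm_eq_one_norm_apply_lt_of_mul_eq_one
    {T R : K →L[𝕜] K} (hTR : T * R = 1) {M : ℝ} (hM : 0 < M) (hR : M < ‖R‖) :
    ∃ y : K, ‖y‖ = 1 ∧ ‖T y‖ < M⁻¹ := by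
  obtain ⟨w, hw⟩ : ∃ w, M * ‖w‖ < ‖R w‖ := by
    by_contra! h
    exact hR.not_ge (R.opNorm_le_bound hM.le h)
  have hRw : R w ≠ 0 := norm_pos_iff.1 ((by positivity : 0 ≤ M * ‖w‖).trans_lt hw)
  refine ⟨(‖R w‖⁻¹ : 𝕜) • R w, norm_smul_inv_norm hRw, ?_⟩
  have hTRw : T (R w) = w := DFunLike.congr_fun hTR w
  rw [map_smul, hTRw, norm_smul, norm_inv, RCLike.norm_ofReal, abs_norm,
    inv_mul_lt_iff₀ (norm_pos_iff.2 hRw), lt_mul_inv_iff₀ hM, mul_comm]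
  exact hw

theorem exists_norm_eq_one_norm_apply_sub_self_lt
    (S : Subalgebra 𝕜 (K →L[𝕜] K)) [CompleteSpace S] (χ : S →ₐ[𝕜] 𝕜) {c : S}
    (hc : ‖c‖ ≤ 1) (hχc : χ c = 1) {ε : ℝ} (hε : 0 < ε) :
    ∃ y : K, ‖y‖ = 1 ∧ ‖(c : K →L[𝕜] K) y - y‖ < ε := by
  set s : ℝ := min 1 (ε / 3)
  have hs : 0 < s := lt_min one_pos (by positivity)
  have hs1 : s ≤ 1 := min_le_left _ _
  have hrc : ‖((1 - s : ℝ) : 𝕜) • c‖ < 1 := by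
    calc ‖((1 - s : ℝ) : 𝕜) • c‖ ≤ ‖((1 - s : ℝ) : 𝕜)‖ * ‖c‖ := norm_smul_le _ _
      _ ≤ 1 - s := by
        rw [RCLike.norm_ofReal, abs_of_nonneg (by linarith)]
        nlinarith [norm_nonneg c]
      _ < 1 := by linarith
  set u := Units.oneSub _ hrc
  have hχu : χ u = s := by simp [u, hχc]
  have hu_inv : s⁻¹ ≤ ‖(↑u⁻¹ : S)‖ := by
    have h := AlgHom.norm_apply_le_self_mul_norm_one χ (↑u⁻¹ : S)
    rw [map_units_inv, hχu, norm_inv, RCLike.norm_ofReal, abs_of_pos hs] at h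
    exact h.trans (mul_le_of_le_one_right (norm_nonneg _) ContinuousLinearMap.norm_id_le)
  have h2s : (2 * s)⁻¹ < ‖((↑u⁻¹ : S) : K →L[𝕜] K)‖ :=
    lt_of_lt_of_le ((inv_lt_inv₀ (by positivity) hs).2 (by linarith)) hu_inv
  obtain ⟨y, hy, huy⟩ := exists_norm_eq_one_norm_apply_lt_of_mul_eq_one
    (congrArg Subtype.val u.mul_inv) (by positivity) h2s
  rw [inv_inv] at huy
  have huy_eq : ((u : S) : K →L[𝕜] K) y = y - ((1 - s : ℝ) : 𝕜) • (c : K →L[𝕜] K) y := by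
    simp [u]
  have hcy : ‖(c : K →L[𝕜] K) y‖ ≤ 1 := by
    simpa [hy] using (c : K →L[𝕜] K).le_of_opNorm_le hc y
  refine ⟨y, hy, ?_⟩
  calc ‖(c : K →L[𝕜] K) y - y‖
      = ‖(s : 𝕜) • (c : K →L[𝕜] K) y - ((u : S) : K →L[𝕜] K) y‖ := by
        rw [huy_eq]; congr 1; push_cast; module
    _ ≤ s * ‖(c : K →L[𝕜] K) y‖ + ‖((u : S) : K →L[𝕜] K) y‖ := by
        grw [norm_sub_le, norm_smul, RCLike.norm_ofReal, abs_of_pos hs]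
    _ < s * 1 + 2 * s := add_lt_add_of_le_of_lt (by gcongr) huy
    _ ≤ ε := by linarith [min_le_right 1 (ε / 3)]

end ApproximateEigenvector

section Averaging

variable {𝕜 K : Type*} [RCLike 𝕜] [NormedAddCommGroup K] [InnerProductSpace 𝕜 K]

theorem norm_apply_sub_self_sq_le {T : K →L[𝕜] K} (hT : ‖T‖ ≤ 1) (y : K) :
    ‖T y - y‖ ^ 2 ≤ 2 * RCLike.re (inner 𝕜 (y - T y) y) := by
  have hTy : ‖T y‖ ≤ ‖y‖ := by simpa using T.le_of_opNorm_le hT y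
  rw [norm_sub_sq (𝕜 := 𝕜), inner_sub_left, map_sub, inner_self_eq_norm_sq]
  nlinarith [norm_nonneg (T y)]

theorem norm_apply_sub_self_sq_le_norm_sum {ι : Type*} [Fintype ι] {T : ι → K →L[𝕜] K}
    (hT : ∀ i, ‖T i‖ ≤ 1) (y : K) (i : ι) :
    ‖T i y - y‖ ^ 2 ≤ 2 * (‖∑ j, (y - T j y)‖ * ‖y‖) := by
  have hre (j : ι) := norm_apply_sub_self_sq_le (hT j) y
  calc ‖T i y - y‖ ^ 2 ≤ 2 * RCLike.re (inner 𝕜 (y - T i y) y) := hre i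
    _ ≤ 2 * ∑ j, RCLike.re (inner 𝕜 (y - T j y) y) := by
        gcongr
        exact Finset.single_le_sum (f := fun j => RCLike.re (inner 𝕜 (y - T j y) y))
          (fun j _ => by nlinarith [hre j, sq_nonneg ‖T j y - y‖]) (Finset.mem_univ i)
    _ = 2 * RCLike.re (inner 𝕜 (∑ j, (y - T j y)) y) := by rw [sum_inner, map_sum]
    _ ≤ 2 * (‖∑ j, (y - T j y)‖ * ‖y‖) := by gcongr; exact re_inner_le_norm _ _

theorem exists_seq_tendsto_apply_sub_self {ι : Type*} [Fintype ι]
    (S : Subalgebra 𝕜 (K →L[𝕜] K)) [CompleteSpace S] (χ : S →ₐ[𝕜] 𝕜)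
    {B : ι → K →L[𝕜] K} (hB : ∀ i, ‖B i‖ ≤ 1) (hBS : ∀ i, B i ∈ S)
    (hχ : ∀ i, χ ⟨B i, hBS i⟩ = 1) :
    ∃ y : ℕ → K, (∀ n, ‖y n‖ = 1) ∧ ∀ i, Tendsto (fun n => B i (y n) - y n) atTop (𝓝 0) := by
  set N : 𝕜 := Fintype.card ι + 1
  have hN : N ≠ 0 := Nat.cast_add_one_ne_zero _
  have hN_norm : ‖N‖ = Fintype.card ι + 1 := by
    simpa [N] using RCLike.norm_natCast (K := 𝕜) (Fintype.card ι + 1)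
  -- The summand `1` keeps `χ c = 1` when `ι` is empty.
  set c : S := N⁻¹ • (1 + ∑ i, ⟨B i, hBS i⟩) with hc_def
  have hc : ‖c‖ ≤ 1 := by
    have h1 : ‖(1 : S)‖ ≤ 1 := ContinuousLinearMap.norm_id_le
    calc ‖c‖ ≤ ‖N⁻¹‖ * (‖(1 : S)‖ + ∑ i, ‖B i‖) := by
          rw [hc_def]
          refine (norm_smul_le _ _).trans ?_
          gcongr
          exact (norm_add_le _ _).trans (add_le_add_right (norm_sum_le _ _) _)
      _ ≤ ‖N⁻¹‖ * ‖N‖ := by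
          grw [hN_norm, h1, Finset.sum_le_sum fun i _ => hB i]
          simp [add_comm]
      _ = 1 := by rw [norm_inv, inv_mul_cancel₀ (norm_ne_zero_iff.2 hN)]
  have hχc : χ c = 1 := by
    simp [c, hχ, N]
    field_simp
    ring
  have hsum (y : K) : ∑ i, (y - B i y) = N • (y - (c : K →L[𝕜] K) y) := by
    simp [c, smul_sub, smul_smul, hN, Finset.sum_sub_distrib, N, add_smul,
      Nat.cast_smul_eq_nsmul]
    abel
  choose y hy1 hyc using fun n : ℕ =>
    exists_norm_eq_one_norm_apply_sub_self_lt S χ hc hχc (Nat.one_div_pos_of_nat (n := n))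
  have hcy : Tendsto (fun n => ‖(c : K →L[𝕜] K) (y n) - y n‖) atTop (𝓝 0) :=
    squeeze_zero (fun n => norm_nonneg _) (fun n => (hyc n).le)
      tendsto_one_div_add_atTop_nhds_zero_nat
  refine ⟨y, hy1, fun i => ?_⟩
  rw [tendsto_zero_iff_norm_tendsto_zero]
  have hlim : Tendsto (fun n => √(2 * (‖N‖ * ‖(c : K →L[𝕜] K) (y n) - y n‖))) atTop (𝓝 0) := by
    simpa using ((hcy.const_mul ‖N‖).const_mul 2).sqrt
  refine squeeze_zero (fun n => norm_nonneg _) (fun n => ?_) hlim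
  rw [Real.le_sqrt (norm_nonneg _) (by positivity)]
  simpa [hsum, norm_smul, hy1, norm_sub_rev] using norm_apply_sub_self_sq_le_norm_sum hB (y n) i

end Averaging

section PolyEval

variable {H K E : Type*}
  [NormedAddCommGroup H] [InnerProductSpace ℂ H]
  [NormedAddCommGroup K] [InnerProductSpace ℂ K]
  [NormedAddCommGroup E] [InnerProductSpace ℂ E]

theorem tendsto_polyEval_tensor_sub_tensor_polyEval {d : ℕ} {t : H →ₗ[ℂ] K →ₗ[ℂ] E}
    (ht : ∀ x y, ‖t x y‖ = ‖x‖ * ‖y‖)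
    {A : Fin d → H →L[ℂ] H} {B : Fin d → K →L[ℂ] K} {AB : Fin d → E →L[ℂ] E}
    (hAB : ∀ j x y, AB j (t x y) = t (A j x) (B j y))
    {ι : Type*} {l : Filter ι} {y : ι → K} (hy : ∀ j, Tendsto (fun i => B j (y i) - y i) l (𝓝 0))
    (p : MvPolynomial (Fin d) ℂ) (x : H) :
    Tendsto (fun i => polyEval AB p (t x (y i)) - t (polyEval A p x) (y i)) l (𝓝 0) := by
  have hsum (i : ι) : polyEval AB p (t x (y i)) - t (polyEval A p x) (y i) =
      ∑ α ∈ p.support, MvPolynomial.coeff α p • t (tuplePow A α x) (tuplePow B α (y i) - y i) := by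
    simp [polyEval_eq_sum, tuplePow_apply_tensor hAB, map_sum, smul_sub, Finset.sum_sub_distrib]
  simp_rw [hsum]
  rw [← Finset.sum_const_zero (s := p.support)]
  refine tendsto_finsetSum _ fun α _ => tendsto_zero_iff_norm_tendsto_zero.2 ?_
  have hv := (tendsto_tuplePow_apply_sub_self hy α).norm
  simpa only [norm_smul, ht, norm_zero, mul_zero] using
    (hv.const_mul ‖tuplePow A α x‖).const_mul ‖MvPolynomial.coeff α p‖

end PolyEval

theorem vN_of_tensor_vN_general {d : ℕ} {H K E : Type*}
    [NormedAddCommGroup H] [InnerProductSpace ℂ H]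
    [NormedAddCommGroup K] [InnerProductSpace ℂ K] [CompleteSpace K]
    [NormedAddCommGroup E] [InnerProductSpace ℂ E]
    (A : Fin d → (H →L[ℂ] H)) (B : Fin d → (K →L[ℂ] K))
    (hBcontr : ∀ j, ‖B j‖ ≤ 1)
    (χ : ((Algebra.adjoin ℂ (Set.range B)).topologicalClosure) →ₐ[ℂ] ℂ)
    (hχ : ∀ j (hj : B j ∈ (Algebra.adjoin ℂ (Set.range B)).topologicalClosure),
      χ ⟨B j, hj⟩ = 1)
    (t : H →ₗ[ℂ] K →ₗ[ℂ] E)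
    (ht_inner : ∀ (x x' : H) (y y' : K),
      (inner ℂ (t x y) (t x' y') : ℂ) = (inner ℂ x x' : ℂ) * (inner ℂ y y' : ℂ))
    (AB : Fin d → (E →L[ℂ] E))
    (hAB : ∀ j x y, AB j (t x y) = t (A j x) (B j y))
    (hABvN : ∀ p : MvPolynomial (Fin d) ℂ, ‖polyEval AB p‖ ≤ polySup p) :
    ∀ p : MvPolynomial (Fin d) ℂ, ‖polyEval A p‖ ≤ polySup p := by
  have : CompleteSpace (Algebra.adjoin ℂ (Set.range B)).topologicalClosure :=
    (Subalgebra.isClosed_topologicalClosure _).completeSpace_coe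
  have hBS (j : Fin d) : B j ∈ (Algebra.adjoin ℂ (Set.range B)).topologicalClosure :=
    Subalgebra.le_topologicalClosure _ (Algebra.subset_adjoin ⟨j, rfl⟩)
  obtain ⟨y, hy, hyB⟩ :=
    exists_seq_tendsto_apply_sub_self _ χ hBcontr hBS fun j => hχ j _
  have ht := norm_apply_apply_of_inner ht_inner
  intro p
  refine (polyEval A p).opNorm_le_bound (Real.iSup_nonneg fun _ => norm_nonneg _) fun x => ?_
  have hlim := (tendsto_polyEval_tensor_sub_tensor_polyEval ht hAB hyB p x).norm
  refine ge_of_tendsto' (by simpa using hlim.const_add (polySup p * ‖x‖)) fun n => ?_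
  calc ‖polyEval A p x‖ = ‖t (polyEval A p x) (y n)‖ := by rw [ht, hy, mul_one]
    _ ≤ ‖polyEval AB p (t x (y n))‖ + ‖polyEval AB p (t x (y n)) - t (polyEval A p x) (y n)‖ :=
        norm_le_insert _ _
    _ ≤ polySup p * ‖x‖ + ‖polyEval AB p (t x (y n)) - t (polyEval A p x) (y n)‖ := by
        grw [(polyEval AB p).le_opNorm, hABvN, ht, hy, mul_one]

/-- Let `A`, `B` be commuting `d`-tuples of contractions on Hilbert spaces
`H`, `K`. Suppose there is a unital multiplicative linear functional `χ` on the unital Banach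
algebra generated by `B_1, …, B_d` with `χ(B_j) = 1` for all `j`. If the tuple
`A ⊗ B = (A_1 ⊗ B_1, …, A_d ⊗ B_d)` on the Hilbert space tensor product `H ⊗ K` (axiomatized
here by a bilinear map `t` with `⟪t x y, t x' y'⟫ = ⟪x,x'⟫⟪y,y'⟫`, total elementary tensors,
and `(A_j ⊗ B_j)(t x y) = t (A_j x) (B_j y)`) satisfies von Neumann's inequality, then so
does `A`. -/
theorem vN_of_tensor_vN {d : ℕ} {H K E : Type*}
    [NormedAddCommGroup H] [InnerProductSpace ℂ H] [CompleteSpace H]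
    [NormedAddCommGroup K] [InnerProductSpace ℂ K] [CompleteSpace K]
    [NormedAddCommGroup E] [InnerProductSpace ℂ E] [CompleteSpace E]
    (A : Fin d → (H →L[ℂ] H)) (B : Fin d → (K →L[ℂ] K))
    (hAcomm : ∀ i j, Commute (A i) (A j)) (hBcomm : ∀ i j, Commute (B i) (B j))
    (hAcontr : ∀ j, ‖A j‖ ≤ 1) (hBcontr : ∀ j, ‖B j‖ ≤ 1)
    (χ : ((Algebra.adjoin ℂ (Set.range B)).topologicalClosure) →ₐ[ℂ] ℂ)
    (hχ : ∀ j (hj : B j ∈ (Algebra.adjoin ℂ (Set.range B)).topologicalClosure),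
      χ ⟨B j, hj⟩ = 1)
    (t : H →ₗ[ℂ] K →ₗ[ℂ] E)
    (ht_inner : ∀ (x x' : H) (y y' : K),
      (inner ℂ (t x y) (t x' y') : ℂ) = (inner ℂ x x' : ℂ) * (inner ℂ y y' : ℂ))
    (ht_dense : (Submodule.span ℂ {e : E | ∃ x y, e = t x y}).topologicalClosure = ⊤)
    (AB : Fin d → (E →L[ℂ] E))
    (hAB : ∀ j x y, AB j (t x y) = t (A j x) (B j y))
    (hABvN : ∀ p : MvPolynomial (Fin d) ℂ, ‖polyEval AB p‖ ≤ polySup p) :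
    ∀ p : MvPolynomial (Fin d) ℂ, ‖polyEval A p‖ ≤ polySup p :=
  vN_of_tensor_vN_general A B hBcontr χ hχ t ht_inner AB hAB hABvN
end

section
/- Let T = (T_1, ..., T_d) and T̃ = (T̃_1, ..., T̃_d) be two commuting operator-valued multishifts on ℓ²_H(N^d) whose operator weights {A^{(j)}_α} and {Ã^{(j)}_α} are all unitary operators on H. Then T and T̃ are unitarily equivalent: there exists a unitary U on ℓ²_H(N^d) with U T_j U* = T̃_j for all j = 1, ..., d. -/
/-- The `j`-th standard unit multi-index in `ℕ^d`. -/
def unitIdx {d : ℕ} (j : Fin d) : Fin d → ℕ := fun i => if i = j then 1 else 0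

noncomputable section

variable {d : ℕ} {H : Type*} [NormedAddCommGroup H] [InnerProductSpace ℂ H] [CompleteSpace H]

def mdeg (α : Fin d → ℕ) : ℕ := ∑ i, α i

def mpred (α : Fin d → ℕ) (j : Fin d) : Fin d → ℕ := fun i => if i = j then α j - 1 else α i

lemma mpred_add_unitIdx {α : Fin d → ℕ} {j : Fin d} (h : α j ≠ 0) :
    mpred α j + unitIdx j = α := by
  funext i
  by_cases hij : i = j <;> simp [mpred, unitIdx, hij, Pi.add_apply, Nat.sub_add_cancel (Nat.one_le_iff_ne_zero.mpr h)]

lemma mdeg_mpred_lt {α : Fin d → ℕ} {j : Fin d} (h : α j ≠ 0) :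
    mdeg (mpred α j) < mdeg α := by
  apply Finset.sum_lt_sum
  · intro i _
    by_cases hij : i = j <;> simp [mpred, hij, Nat.sub_le]
  · exact ⟨j, Finset.mem_univ j, by simp [mpred]; omega⟩

/-- minimal index with nonzero entry -/
def mmin (α : Fin d → ℕ) (h : ∃ j, α j ≠ 0) : Fin d :=
  (Finset.univ.filter fun j => α j ≠ 0).min'
    ⟨h.choose, by simp [h.choose_spec]⟩

lemma mmin_apply_ne (α : Fin d → ℕ) (h : ∃ j, α j ≠ 0) : α (mmin α h) ≠ 0 := by
  have := Finset.min'_mem (Finset.univ.filter fun j => α j ≠ 0)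
    ⟨h.choose, by simp [h.choose_spec]⟩
  simpa [mmin] using this

lemma mmin_le (α : Fin d → ℕ) (h : ∃ j, α j ≠ 0) {j : Fin d} (hj : α j ≠ 0) :
    mmin α h ≤ j :=
  Finset.min'_le _ _ (by simp [hj])

lemma mmin_eq (α : Fin d → ℕ) (h : ∃ j, α j ≠ 0) {k : Fin d} (hk : α k ≠ 0)
    (hmin : ∀ i, α i ≠ 0 → k ≤ i) : mmin α h = k :=
  le_antisymm (mmin_le α h hk) (hmin _ (mmin_apply_ne α h))

variable (A A' : Fin d → (Fin d → ℕ) → (H →L[ℂ] H))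

def uOp (α : Fin d → ℕ) : H →L[ℂ] H :=
  if h : ∃ j, α j ≠ 0 then
    A' (mmin α h) (mpred α (mmin α h)) * uOp (mpred α (mmin α h)) *
      star (A (mmin α h) (mpred α (mmin α h)))
  else 1
termination_by mdeg α
decreasing_by exact mdeg_mpred_lt (mmin_apply_ne α h)

lemma uOp_eq_of_min (α : Fin d → ℕ) {k : Fin d} (hk : α k ≠ 0)
    (hmin : ∀ i, α i ≠ 0 → k ≤ i) :
    uOp A A' α = A' k (mpred α k) * uOp A A' (mpred α k) * star (A k (mpred α k)) := by
  rw [uOp, dif_pos ⟨k, hk⟩, mmin_eq α ⟨k, hk⟩ hk hmin]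

lemma unitIdx_apply_self (j : Fin d) : unitIdx j j = 1 := by simp [unitIdx]

lemma uOp_unitary (hAu : ∀ j α, A j α ∈ unitary (H →L[ℂ] H))
    (hA'u : ∀ j α, A' j α ∈ unitary (H →L[ℂ] H)) (α : Fin d → ℕ) :
    uOp A A' α ∈ unitary (H →L[ℂ] H) := by
  have key : ∀ n (α : Fin d → ℕ), mdeg α = n → uOp A A' α ∈ unitary (H →L[ℂ] H) := by
    intro n
    induction n using Nat.strong_induction_on with
    | _ n ih =>
      intro α hn
      rw [uOp]
      split_ifs with h
      · exact mul_mem (mul_mem (hA'u _ _) (ih _ (hn ▸ mdeg_mpred_lt (mmin_apply_ne α h)) _ rfl))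
          (Unitary.star_mem (hAu _ _))
      · exact one_mem _
  exact key _ α rfl

lemma uOp_step
    (hAc : ∀ i j α, (A i (α + unitIdx j)).comp (A j α) = (A j (α + unitIdx i)).comp (A i α))
    (hA'c : ∀ i j α, (A' i (α + unitIdx j)).comp (A' j α) = (A' j (α + unitIdx i)).comp (A' i α))
    (α : Fin d → ℕ) (j : Fin d) :
    uOp A A' (α + unitIdx j) = A' j α * uOp A A' α * star (A j α) := by
  have key : ∀ n (α : Fin d → ℕ) (j : Fin d), mdeg α = n →
      uOp A A' (α + unitIdx j) = A' j α * uOp A A' α * star (A j α) := by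
    intro n
    induction n using Nat.strong_induction_on with
    | _ n ih =>
      intro α j hn
      have hj' : (α + unitIdx j) j ≠ 0 := by simp [unitIdx]
      have h : ∃ i, (α + unitIdx j) i ≠ 0 := ⟨j, hj'⟩
      set k := mmin (α + unitIdx j) h with hkdef
      have hk : (α + unitIdx j) k ≠ 0 := mmin_apply_ne _ h
      have hkj : k ≤ j := mmin_le _ h hj'
      by_cases hkj' : k = j
      · -- minimal index is j itself
        have hpred : mpred (α + unitIdx j) j = α := by
          funext i
          by_cases hij : i = j <;> simp [mpred, unitIdx, hij]
        have := uOp_eq_of_min A A' (α + unitIdx j) hj'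
          (fun i hi => hkj' ▸ mmin_le _ h hi)
        rw [this, hpred]
      · -- minimal index k < j
        have hklt : k < j := lt_of_le_of_ne hkj hkj'
        have hαk : α k ≠ 0 := by
          have : (α + unitIdx j) k = α k := by simp [unitIdx, hkj']
          rwa [this] at hk
        set β := mpred α k with hβdef
        have hβk : β + unitIdx k = α := mpred_add_unitIdx hαk
        have hpredk : mpred (α + unitIdx j) k = β + unitIdx j := by
          funext i
          by_cases hik : i = k
          · simp [mpred, unitIdx, hik, hkj', hβdef, Ne.symm hkj']
          · by_cases hij : i = j <;> simp [mpred, unitIdx, hik, hij, hβdef, Ne.symm hkj']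
        have hβdeg : mdeg β < n := hn ▸ mdeg_mpred_lt hαk
        -- uOp at α + unitIdx j
        have e1 : uOp A A' (α + unitIdx j) =
            A' k (β + unitIdx j) * uOp A A' (β + unitIdx j) * star (A k (β + unitIdx j)) := by
          rw [uOp_eq_of_min A A' (α + unitIdx j) hk (fun i hi => mmin_le _ h hi), hpredk]
        -- uOp at α
        have e2 : uOp A A' α = A' k β * uOp A A' β * star (A k β) := by
          apply uOp_eq_of_min A A' α hαk
          intro i hi
          have : (α + unitIdx j) i ≠ 0 := by
            intro h0
            exact hi (by simpa using Nat.eq_zero_of_add_eq_zero_right (by simpa [Pi.add_apply] using h0))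
          exact mmin_le _ h this
        -- IH
        have e3 : uOp A A' (β + unitIdx j) = A' j β * uOp A A' β * star (A j β) :=
          ih _ hβdeg β j rfl
        -- commutation facts
        have c1 : A' k (β + unitIdx j) * A' j β = A' j α * A' k β := by
          have := hA'c k j β
          simp only [ContinuousLinearMap.mul_def] at this ⊢
          rw [this, hβk]
        have c2 : star (A j β) * star (A k (β + unitIdx j)) = star (A k β) * star (A j α) := by
          have h0 : A k (β + unitIdx j) * A j β = A j α * A k β := by
            have := hAc k j β
            simp only [ContinuousLinearMap.mul_def] at this ⊢
            rw [this, hβk]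
          calc star (A j β) * star (A k (β + unitIdx j))
              = star (A k (β + unitIdx j) * A j β) := (star_mul _ _).symm
            _ = star (A j α * A k β) := by rw [h0]
            _ = star (A k β) * star (A j α) := star_mul _ _
        rw [e1, e3, e2]
        simp only [mul_assoc]
        rw [show star (A j β) * star (A k (β + unitIdx j)) = star (A k β) * star (A j α) from c2]
        rw [← mul_assoc, ← mul_assoc, c1]
        simp [mul_assoc]
  exact key _ α j rfl

local notation "ℓ²" => lp (fun _ : Fin d → ℕ => H) 2

set_option linter.unusedSectionVars false

def diagFun (v : (Fin d → ℕ) → (H →L[ℂ] H)) (hv : ∀ α x, ‖v α x‖ = ‖x‖)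
    (x : ℓ²) : ℓ² :=
  ⟨fun α => v α (x α), by
    apply memℓp_gen
    have hs := (lp.memℓp x).summable (p := 2) (by norm_num)
    simpa only [hv] using hs⟩

lemma diagFun_apply (v : (Fin d → ℕ) → (H →L[ℂ] H)) (hv : ∀ α x, ‖v α x‖ = ‖x‖)
    (x : ℓ²) (α : Fin d → ℕ) : (diagFun v hv x) α = v α (x α) := rfl

lemma diagFun_norm (v : (Fin d → ℕ) → (H →L[ℂ] H)) (hv : ∀ α x, ‖v α x‖ = ‖x‖)
    (x : ℓ²) : ‖diagFun v hv x‖ = ‖x‖ := by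
  rw [lp.norm_eq_tsum_rpow (p := 2) (by norm_num), lp.norm_eq_tsum_rpow (p := 2) (by norm_num)]
  congr 1
  exact tsum_congr fun α => by rw [diagFun_apply, hv]

def diagCLM (v : (Fin d → ℕ) → (H →L[ℂ] H)) (hv : ∀ α x, ‖v α x‖ = ‖x‖) :
    ℓ² →L[ℂ] ℓ² :=
  LinearMap.mkContinuous
    { toFun := diagFun v hv
      map_add' := fun x y => lp.ext (funext fun α => by
        simp only [diagFun_apply, lp.coeFn_add, Pi.add_apply, map_add])
      map_smul' := fun c x => lp.ext (funext fun α => by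
        simp only [diagFun_apply, lp.coeFn_smul, Pi.smul_apply, map_smul, RingHom.id_apply]) }
    1 (fun x => by rw [one_mul]; exact le_of_eq (diagFun_norm v hv x))

lemma diagCLM_apply (v : (Fin d → ℕ) → (H →L[ℂ] H)) (hv : ∀ α x, ‖v α x‖ = ‖x‖)
    (x : ℓ²) (α : Fin d → ℕ) : (diagCLM v hv x) α = v α (x α) := rfl

lemma diagCLM_star (v : (Fin d → ℕ) → (H →L[ℂ] H)) (hv : ∀ α x, ‖v α x‖ = ‖x‖)
    (hv' : ∀ α x, ‖star (v α) x‖ = ‖x‖) :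
    star (diagCLM v hv) = diagCLM (fun α => star (v α)) hv' := by
  rw [ContinuousLinearMap.star_eq_adjoint]
  symm
  rw [ContinuousLinearMap.eq_adjoint_iff]
  intro x y
  rw [lp.inner_eq_tsum, lp.inner_eq_tsum]
  exact tsum_congr fun α => by
    rw [diagCLM_apply, diagCLM_apply, ContinuousLinearMap.star_eq_adjoint,
      ContinuousLinearMap.adjoint_inner_left]

end


/-- Two commuting operator-valued multishifts on `ℓ²_H(ℕ^d)` with unitary
operator weights are unitarily equivalent: there is a unitary `U` on `ℓ²_H(ℕ^d)` with
`U T_j U* = T'_j` for all `j`. -/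
theorem multishift_unitary_weights_unitarily_equivalent {d : ℕ} (H : Type*)
    [NormedAddCommGroup H] [InnerProductSpace ℂ H] [CompleteSpace H]
    (A A' : Fin d → (Fin d → ℕ) → (H →L[ℂ] H))
    (hAu : ∀ j α, A j α ∈ unitary (H →L[ℂ] H))
    (hA'u : ∀ j α, A' j α ∈ unitary (H →L[ℂ] H))
    (hAc : ∀ i j α, (A i (α + unitIdx j)).comp (A j α) = (A j (α + unitIdx i)).comp (A i α))
    (hA'c : ∀ i j α, (A' i (α + unitIdx j)).comp (A' j α) = (A' j (α + unitIdx i)).comp (A' i α))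
    (T T' : Fin d → (lp (fun _ : Fin d → ℕ => H) 2 →L[ℂ] lp (fun _ : Fin d → ℕ => H) 2))
    (hT : ∀ j x, (∀ α, (T j x) (α + unitIdx j) = A j α (x α)) ∧
        (∀ α, α j = 0 → (T j x) α = 0))
    (hT' : ∀ j x, (∀ α, (T' j x) (α + unitIdx j) = A' j α (x α)) ∧
        (∀ α, α j = 0 → (T' j x) α = 0)) :
    ∃ U : lp (fun _ : Fin d → ℕ => H) 2 →L[ℂ] lp (fun _ : Fin d → ℕ => H) 2,
      U ∈ unitary (lp (fun _ : Fin d → ℕ => H) 2 →L[ℂ] lp (fun _ : Fin d → ℕ => H) 2) ∧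
      ∀ j, (U.comp (T j)).comp (star U) = T' j := by
  set u := uOp A A' with hu_def
  have hu : ∀ α, u α ∈ unitary (H →L[ℂ] H) := uOp_unitary A A' hAu hA'u
  have hv : ∀ α x, ‖u α x‖ = ‖x‖ := fun α x =>
    ContinuousLinearMap.norm_map_of_mem_unitary (hu α) x
  have hv' : ∀ α x, ‖star (u α) x‖ = ‖x‖ := fun α x =>
    ContinuousLinearMap.norm_map_of_mem_unitary (Unitary.star_mem (hu α)) x
  set Uf := diagCLM u hv with hUf_def
  set Ug := diagCLM (fun α => star (u α)) hv' with hUg_def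
  have hstar : star Uf = Ug := diagCLM_star u hv hv'
  have hUgUf : Ug * Uf = 1 := by
    refine ContinuousLinearMap.ext fun x => lp.ext (funext fun α => ?_)
    show (Ug (Uf x)) α = x α
    rw [diagCLM_apply, diagCLM_apply]
    have h1 : star (u α) * u α = 1 := (Unitary.mem_iff.mp (hu α)).1
    calc star (u α) (u α (x α)) = (star (u α) * u α) (x α) := rfl
      _ = x α := by rw [h1]; rfl
  have hUfUg : Uf * Ug = 1 := by
    refine ContinuousLinearMap.ext fun x => lp.ext (funext fun α => ?_)
    show (Uf (Ug x)) α = x α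
    rw [diagCLM_apply, diagCLM_apply]
    have h1 : u α * star (u α) = 1 := (Unitary.mem_iff.mp (hu α)).2
    calc u α (star (u α) (x α)) = (u α * star (u α)) (x α) := rfl
      _ = x α := by rw [h1]; rfl
  have hUmem : Uf ∈ unitary (lp (fun _ : Fin d → ℕ => H) 2 →L[ℂ] lp (fun _ : Fin d → ℕ => H) 2) :=
    Unitary.mem_iff.mpr ⟨by rw [hstar]; exact hUgUf, by rw [hstar]; exact hUfUg⟩
  refine ⟨Uf, hUmem, fun j => ?_⟩
  have hcomm : Uf.comp (T j) = (T' j).comp Uf := by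
    refine ContinuousLinearMap.ext fun x => lp.ext (funext fun α => ?_)
    show (Uf (T j x)) α = (T' j (Uf x)) α
    by_cases hαj : α j = 0
    · rw [diagCLM_apply, (hT j x).2 α hαj, (hT' j (Uf x)).2 α hαj, map_zero]
    · obtain ⟨β, rfl⟩ : ∃ β, β + unitIdx j = α := ⟨mpred α j, mpred_add_unitIdx hαj⟩
      rw [diagCLM_apply, (hT j x).1 β, (hT' j (Uf x)).1 β, diagCLM_apply]
      rw [hu_def, uOp_step A A' hAc hA'c β j]
      have h1 : star (A j β) * A j β = 1 := (Unitary.mem_iff.mp (hAu j β)).1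
      calc (A' j β * uOp A A' β * star (A j β)) ((A j β) (x β))
          = (A' j β) ((uOp A A' β) ((star (A j β) * A j β) (x β))) := rfl
        _ = (A' j β) ((uOp A A' β) (x β)) := by rw [h1]; rfl
  calc (Uf.comp (T j)).comp (star Uf) = ((T' j).comp Uf).comp Ug := by rw [hcomm, hstar]
    _ = (T' j).comp (Uf.comp Ug) := by rw [ContinuousLinearMap.comp_assoc]
    _ = T' j := by
        rw [show Uf.comp Ug = 1 from hUfUg]
        exact ContinuousLinearMap.comp_id _
end

section
/- In the setting of two commuting operator-valued multishifts on ℓ²_H(N^d) with unitary operator weights {A^{(j)}_α} and {Ã^{(j)}_α}, the recursively defined family U_0 = I_H and U_{α+ε_j} = Ã^{(j)}_α U_α A^{(j)*}_α is well-defined: if α = β + ε_j = γ + ε_k, then Ã^{(j)}_β U_β A^{(j)*}_β = Ã^{(k)}_γ U_γ A^{(k)*}_γ, and each U_α is unitary. -/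
section Aux
variable {d : ℕ} {H : Type*} [NormedAddCommGroup H] [InnerProductSpace ℂ H] [CompleteSpace H]

noncomputable def pathAux (A : Fin d → (Fin d → ℕ) → (H →L[ℂ] H)) :
    ℕ → (Fin d → ℕ) → (H →L[ℂ] H)
  | 0, _ => 1
  | (n+1), α =>
    if h : (Finset.univ.filter fun i => α i ≠ 0).Nonempty then
      (A ((Finset.univ.filter fun i => α i ≠ 0).min' h)
          (α - unitIdx ((Finset.univ.filter fun i => α i ≠ 0).min' h))).comp
        (pathAux A n (α - unitIdx ((Finset.univ.filter fun i => α i ≠ 0).min' h)))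
    else 1

lemma sum_unitIdx (j : Fin d) : ∑ i, unitIdx j i = 1 := by
  simp [unitIdx]

lemma sub_add_unitIdx {α : Fin d → ℕ} {k : Fin d} (h : α k ≠ 0) :
    (α - unitIdx k) + unitIdx k = α := by
  funext i
  simp only [Pi.add_apply, Pi.sub_apply, unitIdx]
  by_cases hik : i = k <;> simp [hik] <;> omega

lemma pathAux_unitary (A : Fin d → (Fin d → ℕ) → (H →L[ℂ] H))
    (hAu : ∀ j α, A j α ∈ unitary (H →L[ℂ] H)) :
    ∀ n α, pathAux A n α ∈ unitary (H →L[ℂ] H) := by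
  intro n
  induction n with
  | zero => intro α; exact one_mem _
  | succ n ih =>
    intro α
    rw [pathAux]
    split
    · exact mul_mem (hAu _ _) (ih _)
    · exact one_mem _

lemma pathAux_step (A : Fin d → (Fin d → ℕ) → (H →L[ℂ] H))
    (hAc : ∀ i j α, (A i (α + unitIdx j)).comp (A j α) = (A j (α + unitIdx i)).comp (A i α)) :
    ∀ n (α : Fin d → ℕ) (j : Fin d), (∑ i, α i) = n →
      pathAux A (n+1) (α + unitIdx j) = (A j α).comp (pathAux A n α) := by
  intro n
  induction n using Nat.strong_induction_on with
  | _ n IH =>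
    intro α j hsum
    set β := α + unitIdx j with hβ
    have hβj : β j ≠ 0 := by simp [hβ, unitIdx]
    have hne : (Finset.univ.filter fun i => β i ≠ 0).Nonempty :=
      ⟨j, by simp [hβj]⟩
    set k := (Finset.univ.filter fun i => β i ≠ 0).min' hne with hk
    rw [pathAux, dif_pos hne]
    by_cases hkj : k = j
    · have hβα : β - unitIdx j = α := by
        funext i
        simp only [hβ, Pi.sub_apply, Pi.add_apply, unitIdx]
        omega
      rw [← hk, hkj, hβα]
    · -- k ≠ j
      have hkβ : β k ≠ 0 := by
        have := Finset.min'_mem _ hne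
        rw [← hk] at this
        simpa using this
      have hαk : α k ≠ 0 := by
        simp only [hβ, Pi.add_apply, unitIdx, if_neg hkj, add_zero] at hkβ
        exact hkβ
      have hαne : (Finset.univ.filter fun i => α i ≠ 0).Nonempty := ⟨k, by simp [hαk]⟩
      have hsub : (Finset.univ.filter fun i => α i ≠ 0) ⊆
          (Finset.univ.filter fun i => β i ≠ 0) := by
        intro i hi
        simp only [Finset.mem_filter, Finset.mem_univ, true_and] at hi ⊢
        simp only [hβ, Pi.add_apply]
        omega
      have hkα : (Finset.univ.filter fun i => α i ≠ 0).min' hαne = k := by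
        apply le_antisymm
        · exact Finset.min'_le _ _ (by simp [hαk])
        · rw [hk]
          exact Finset.min'_le _ _ (hsub (Finset.min'_mem _ hαne))
      obtain ⟨m, rfl⟩ : ∃ m, n = m + 1 := by
        have : α k ≤ ∑ i, α i :=
          Finset.single_le_sum (f := α) (fun i _ => Nat.zero_le _) (Finset.mem_univ k)
        rcases n with _ | m
        · omega
        · exact ⟨m, rfl⟩
      have hβk : β - unitIdx k = (α - unitIdx k) + unitIdx j := by
        funext i
        simp only [hβ, Pi.sub_apply, Pi.add_apply, unitIdx]
        by_cases h1 : i = k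
        · subst h1
          simp [hkj]
        · by_cases h2 : i = j
          · subst h2
            simp [h1]
          · simp [h1, h2]
      have hsum' : (∑ i, (α - unitIdx k) i) = m := by
        have h2 : ∑ i, (α - unitIdx k) i + ∑ i, unitIdx k i = ∑ i, α i := by
          rw [← Finset.sum_add_distrib]
          exact Finset.sum_congr rfl fun i _ => by
            have := congrFun (sub_add_unitIdx hαk) i
            simpa using this
        rw [sum_unitIdx] at h2
        omega
      have hIH := IH m (by omega) (α - unitIdx k) j hsum'
      rw [← hk, hβk, hIH, ← ContinuousLinearMap.comp_assoc, hAc,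
        sub_add_unitIdx hαk, ContinuousLinearMap.comp_assoc]
      congr 1
      rw [pathAux, dif_pos hαne, hkα]

end Aux

/-- Given two families of unitary weights `A^{(j)}_α` and `Ã^{(j)}_α` on `H`,
each satisfying the multishift commutation relations, the recursion `U_0 = I`,
`U_{α+ε_j} = Ã^{(j)}_α U_α (A^{(j)}_α)*` is well-defined (independent of the chain of unit
steps from `0` to `α`), i.e. there exists a family `U_α` satisfying it, and each `U_α` is
unitary. -/
theorem multishift_intertwining_family_well_defined {d : ℕ} (H : Type*)
    [NormedAddCommGroup H] [InnerProductSpace ℂ H] [CompleteSpace H]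
    (A A' : Fin d → (Fin d → ℕ) → (H →L[ℂ] H))
    (hAu : ∀ j α, A j α ∈ unitary (H →L[ℂ] H))
    (hA'u : ∀ j α, A' j α ∈ unitary (H →L[ℂ] H))
    (hAc : ∀ i j α, (A i (α + unitIdx j)).comp (A j α) = (A j (α + unitIdx i)).comp (A i α))
    (hA'c : ∀ i j α, (A' i (α + unitIdx j)).comp (A' j α) = (A' j (α + unitIdx i)).comp (A' i α)) :
    ∃ U : (Fin d → ℕ) → (H →L[ℂ] H),
      U 0 = 1 ∧
      (∀ α j, U (α + unitIdx j) = ((A' j α).comp (U α)).comp (star (A j α))) ∧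
      (∀ α, U α ∈ unitary (H →L[ℂ] H)) := by
  set P : (Fin d → ℕ) → (H →L[ℂ] H) := fun α => pathAux A (∑ i, α i) α with hP
  set P' : (Fin d → ℕ) → (H →L[ℂ] H) := fun α => pathAux A' (∑ i, α i) α with hP'
  have hPstep : ∀ α j, P (α + unitIdx j) = (A j α).comp (P α) := by
    intro α j
    have hs : ∑ i, (α + unitIdx j) i = (∑ i, α i) + 1 := by
      rw [show (∑ i, (α + unitIdx j) i) = (∑ i, α i) + ∑ i, unitIdx j i from
        Finset.sum_add_distrib, sum_unitIdx]
    simp only [hP, hs]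
    exact pathAux_step A hAc _ _ _ rfl
  have hP'step : ∀ α j, P' (α + unitIdx j) = (A' j α).comp (P' α) := by
    intro α j
    have hs : ∑ i, (α + unitIdx j) i = (∑ i, α i) + 1 := by
      rw [show (∑ i, (α + unitIdx j) i) = (∑ i, α i) + ∑ i, unitIdx j i from
        Finset.sum_add_distrib, sum_unitIdx]
    simp only [hP', hs]
    exact pathAux_step A' hA'c _ _ _ rfl
  have hPu : ∀ α, P α ∈ unitary (H →L[ℂ] H) := fun α => pathAux_unitary A hAu _ _
  have hP'u : ∀ α, P' α ∈ unitary (H →L[ℂ] H) := fun α => pathAux_unitary A' hA'u _ _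
  refine ⟨fun α => (P' α) * star (P α), ?_, ?_, ?_⟩
  · have h0 : P (0 : Fin d → ℕ) = 1 := by simp [hP, pathAux]
    have h0' : P' (0 : Fin d → ℕ) = 1 := by simp [hP', pathAux]
    simp [h0, h0']
  · intro α j
    have hstar : star (P (α + unitIdx j)) = star (P α) * star (A j α) := by
      rw [hPstep α j]
      show star ((A j α) * (P α)) = _
      rw [star_mul]
    simp only [hP'step α j, hstar]
    show (A' j α) * (P' α) * (star (P α) * star (A j α)) = _
    show _ = (A' j α) * ((P' α) * star (P α)) * star (A j α)
    simp [mul_assoc]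
  · intro α
    exact mul_mem (hP'u α) (Unitary.star_mem (hPu α))
end

section
/- Let c ∈ (0,1), let x_j, y_j ∈ R satisfy x_j² + y_j² = (1−c)² for j = 1, 2, 3, and set X_j = (x_j, y_j) ∈ R². Let V_j be the 4×4 matrix with entries (V_j)_{12} = x_j, (V_j)_{13} = y_j, (V_j)_{24} = x_j, (V_j)_{34} = y_j, all other entries zero, and let A_j = cI + V_j. With a_{jk} = 1 if j = k and −1 otherwise, and p_V(z) = Σ_{j,k=1}^3 a_{jk} z_j z_k, the (1,4)-entry of the matrix p_V(A_1, A_2, A_3) equals Σ_{j,k=1}^3 a_{jk} ⟨X_j, X_k⟩, and consequently ‖p_V(A_1, A_2, A_3)‖ ≥ 3(1−c)² − 2(⟨X_1,X_2⟩ + ⟨X_2,X_3⟩ + ⟨X_3,X_1⟩). -/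
/-- The Kaijser–Varopoulos nilpotent `4 × 4` matrix with parameters `x, y ∈ ℝ`. -/
noncomputable def KVmatrix (x y : ℝ) : Matrix (Fin 4) (Fin 4) ℂ :=
  !![0, (x : ℂ), (y : ℂ), 0;
     0, 0, 0, (x : ℂ);
     0, 0, 0, (y : ℂ);
     0, 0, 0, 0]

/-- The sign matrix `a_{jk}` (`1` on the diagonal, `−1` off it). -/
def KVsign (j k : Fin 3) : ℝ := if j = k then 1 else -1

/-! In `(cI + V_j)(cI + V_k)` only `V_j V_k` reaches the corner entry `(1,4)`, where it equals
`⟨X_j, X_k⟩`; the operator norm dominates the modulus of every entry. -/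

open Matrix in
theorem Matrix.norm_apply_le_norm_toEuclideanCLM {𝕜 n : Type*} [RCLike 𝕜] [Fintype n]
    [DecidableEq n] (M : Matrix n n 𝕜) (i j : n) :
    ‖M i j‖ ≤ ‖toEuclideanCLM (𝕜 := 𝕜) M‖ := by
  set T := toEuclideanCLM (𝕜 := 𝕜) M
  have hcol : T (EuclideanSpace.single j 1) i = M i j := by
    simp [T, mulVec_single]
  calc ‖M i j‖ = ‖T (EuclideanSpace.single j 1) i‖ := by rw [hcol]
    _ ≤ ‖T (EuclideanSpace.single j 1)‖ := PiLp.norm_apply_le _ i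
    _ ≤ ‖T‖ := by simpa using T.le_opNorm (EuclideanSpace.single j 1)

lemma smul_one_add_KVmatrix_mul_apply_zero_three (c x y x' y' : ℝ) :
    (((c : ℂ) • 1 + KVmatrix x y) * ((c : ℂ) • 1 + KVmatrix x' y')) 0 3 =
      ((x * x' + y * y' : ℝ) : ℂ) := by
  simp [KVmatrix, Matrix.mul_apply, Fin.sum_univ_four, Matrix.one_apply]

lemma sum_KVsign_mul (f : Fin 3 → Fin 3 → ℝ) :
    ∑ j, ∑ k, KVsign j k * f j k =
      f 0 0 + f 1 1 + f 2 2 - (f 0 1 + f 1 0 + f 1 2 + f 2 1 + f 2 0 + f 0 2) := by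
  simp only [Fin.sum_univ_three, KVsign, Fin.reduceEq, if_true, if_false]
  ring

lemma sum_KVsign_mul_inner_of_sq_add_sq_eq (r : ℝ) (x y : Fin 3 → ℝ)
    (hxy : ∀ j, x j ^ 2 + y j ^ 2 = r) :
    ∑ j, ∑ k, KVsign j k * (x j * x k + y j * y k) =
      3 * r -
        2 * ((x 0 * x 1 + y 0 * y 1) + (x 1 * x 2 + y 1 * y 2) + (x 2 * x 0 + y 2 * y 0)) := by
  rw [sum_KVsign_mul]
  linear_combination hxy 0 + hxy 1 + hxy 2

theorem KV_entry_and_norm_bound_general (c : ℝ)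
    (x y : Fin 3 → ℝ) (hxy : ∀ j, x j ^ 2 + y j ^ 2 = (1 - c) ^ 2)
    (A : Fin 3 → Matrix (Fin 4) (Fin 4) ℂ)
    (hA : ∀ j, A j = (c : ℂ) • (1 : Matrix (Fin 4) (Fin 4) ℂ) + KVmatrix (x j) (y j)) :
    (∑ j : Fin 3, ∑ k : Fin 3, (KVsign j k : ℂ) • (A j * A k)) 0 3 =
        ((∑ j : Fin 3, ∑ k : Fin 3, KVsign j k * (x j * x k + y j * y k) : ℝ) : ℂ) ∧
    ‖Matrix.toEuclideanCLM (𝕜 := ℂ)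
        (∑ j : Fin 3, ∑ k : Fin 3, (KVsign j k : ℂ) • (A j * A k))‖ ≥
      3 * (1 - c) ^ 2 -
        2 * ((x 0 * x 1 + y 0 * y 1) + (x 1 * x 2 + y 1 * y 2) + (x 2 * x 0 + y 2 * y 0)) := by
  set P := ∑ j : Fin 3, ∑ k : Fin 3, (KVsign j k : ℂ) • (A j * A k)
  have hentry : P 0 3 =
      ((∑ j : Fin 3, ∑ k : Fin 3, KVsign j k * (x j * x k + y j * y k) : ℝ) : ℂ) := by
    simp only [P, Matrix.sum_apply, Matrix.smul_apply, hA,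
      smul_one_add_KVmatrix_mul_apply_zero_three, smul_eq_mul]
    push_cast
    rfl
  refine ⟨hentry, ?_⟩
  calc _ = ∑ j : Fin 3, ∑ k : Fin 3, KVsign j k * (x j * x k + y j * y k) :=
        (sum_KVsign_mul_inner_of_sq_add_sq_eq _ x y hxy).symm
    _ ≤ ‖P 0 3‖ := by rw [hentry, Complex.norm_real, Real.norm_eq_abs]; exact le_abs_self _
    _ ≤ _ := Matrix.norm_apply_le_norm_toEuclideanCLM P 0 3

/-- Let `c ∈ (0,1)`, `x_j² + y_j² = (1−c)²`, `X_j = (x_j, y_j) ∈ ℝ²`,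
`V_j` the Kaijser–Varopoulos matrices, `A_j = cI + V_j`. With
`p_V(z) = Σ_{j,k} a_{jk} z_j z_k`, the `(1,4)` entry of `p_V(A₁,A₂,A₃) = Σ_{j,k} a_{jk} A_j A_k`
equals `Σ_{j,k} a_{jk} ⟨X_j, X_k⟩`, and consequently
`‖p_V(A₁,A₂,A₃)‖ ≥ 3(1−c)² − 2(⟨X₁,X₂⟩ + ⟨X₂,X₃⟩ + ⟨X₃,X₁⟩)`. -/
theorem KV_entry_and_norm_bound (c : ℝ) (hc : 0 < c) (hc1 : c < 1)
    (x y : Fin 3 → ℝ) (hxy : ∀ j, x j ^ 2 + y j ^ 2 = (1 - c) ^ 2)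
    (A : Fin 3 → Matrix (Fin 4) (Fin 4) ℂ)
    (hA : ∀ j, A j = (c : ℂ) • (1 : Matrix (Fin 4) (Fin 4) ℂ) + KVmatrix (x j) (y j)) :
    (∑ j : Fin 3, ∑ k : Fin 3, (KVsign j k : ℂ) • (A j * A k)) 0 3 =
        ((∑ j : Fin 3, ∑ k : Fin 3, KVsign j k * (x j * x k + y j * y k) : ℝ) : ℂ) ∧
    ‖Matrix.toEuclideanCLM (𝕜 := ℂ)
        (∑ j : Fin 3, ∑ k : Fin 3, (KVsign j k : ℂ) • (A j * A k))‖ ≥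
      3 * (1 - c) ^ 2 -
        2 * ((x 0 * x 1 + y 0 * y 1) + (x 1 * x 2 + y 1 * y 2) + (x 2 * x 0 + y 2 * y 0)) :=
  KV_entry_and_norm_bound_general c x y hxy A hA
end
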